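/- Let E be a real Hilbert space, let L : E → ℝ, let θ ∈ E, and suppose L has gradient h at θ (i.e., HasGradientAt L h θ) with h ≠ 0. Let g ∈ E and define g_final = g if ⟪g, h⟫ ≥ 0, and g_final = g − (⟪g, h⟫ / ‖h‖²)·h otherwise. Then the function t ↦ L(θ − t·g_final) (ℝ → ℝ) has derivative −⟪h, g_final⟫ at t = 0, and this derivative is ≤ 0. -/

import Mathlib

/-!
The rectified direction is `g` itself when `⟪g, h⟫ ≥ 0`, and otherwise `g` minus its orthogonal
projection onto `ℝ ∙ h`, which is orthogonal to `h`. In both cases `⟪h, g_final⟫ ≥ 0`, and by the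
chain rule this inner product is minus the slope of `t ↦ L (θ - t • g_final)` at `0`.
-/

open RealInnerProductSpace

section

variable {E : Type*} [NormedAddCommGroup E] [InnerProductSpace ℝ E]

/-- The rectified update direction `g_final` built from `g_main = g` and `g_calib = h`. -/
noncomputable def rectifiedGradient (g h : E) : E :=
  if 0 ≤ ⟪g, h⟫ then g else g - (⟪g, h⟫ / ‖h‖ ^ 2) • h

theorem inner_sub_smul_inner_div_norm_sq_eq_zero (g h : E) :
    ⟪h, g - (⟪g, h⟫ / ‖h‖ ^ 2) • h⟫ = 0 := by
  have hproj := Submodule.starProjection_singleton ℝ (v := h) g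
  rw [RCLike.ofReal_real_eq_id, id, real_inner_comm] at hproj
  rw [← hproj, ← Submodule.mem_orthogonal_singleton_iff_inner_right]
  exact Submodule.sub_starProjection_mem_orthogonal g

theorem inner_rectifiedGradient_nonneg (g h : E) : 0 ≤ ⟪h, rectifiedGradient g h⟫ := by
  unfold rectifiedGradient
  split_ifs with hgh
  · rwa [real_inner_comm]
  · rw [inner_sub_smul_inner_div_norm_sq_eq_zero]

theorem HasGradientAt.hasDerivAt_comp_sub_smul [CompleteSpace E] {L : E → ℝ} {h θ v : E}
    {t₀ : ℝ} (hL : HasGradientAt L h (θ - t₀ • v)) :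
    HasDerivAt (fun t : ℝ => L (θ - t • v)) (-⟪h, v⟫) t₀ := by
  have hline : HasDerivAt (fun t : ℝ => θ - t • v) (-v) t₀ := by
    simpa using ((hasDerivAt_id t₀).smul_const v).const_sub θ
  have hcomp := hL.hasFDerivAt.comp_hasDerivAt t₀ hline
  simp only [InnerProductSpace.toDual_apply_apply, inner_neg_right] at hcomp
  exact hcomp

end

theorem rectified_step_does_not_increase_calibration_loss_general
    {E : Type*} [NormedAddCommGroup E] [InnerProductSpace ℝ E] [CompleteSpace E]
    (L : E → ℝ) (θ : E) (h : E)
    (hL : HasGradientAt L h θ) (g : E) :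
    HasDerivAt (fun t : ℝ => L (θ - t • (if 0 ≤ ⟪g, h⟫ then g
        else g - (⟪g, h⟫ / ‖h‖ ^ 2) • h)))
      (-⟪h, if 0 ≤ ⟪g, h⟫ then g else g - (⟪g, h⟫ / ‖h‖ ^ 2) • h⟫) 0 ∧
    -⟪h, if 0 ≤ ⟪g, h⟫ then g else g - (⟪g, h⟫ / ‖h‖ ^ 2) • h⟫ ≤ 0 := by
  have hL₀ : HasGradientAt L h (θ - (0 : ℝ) • rectifiedGradient g h) := by simpa using hL
  exact ⟨hL₀.hasDerivAt_comp_sub_smul, neg_nonpos.mpr (inner_rectifiedGradient_nonneg g h)⟩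

theorem rectified_step_does_not_increase_calibration_loss
    {E : Type*} [NormedAddCommGroup E] [InnerProductSpace ℝ E] [CompleteSpace E]
    (L : E → ℝ) (θ : E) (h : E)
    (hL : HasGradientAt L h θ) (hh : h ≠ 0) (g : E) :
    HasDerivAt (fun t : ℝ => L (θ - t • (if 0 ≤ ⟪g, h⟫ then g
        else g - (⟪g, h⟫ / ‖h‖ ^ 2) • h)))
      (-⟪h, if 0 ≤ ⟪g, h⟫ then g else g - (⟪g, h⟫ / ‖h‖ ^ 2) • h⟫) 0 ∧
    -⟪h, if 0 ≤ ⟪g, h⟫ then g else g - (⟪g, h⟫ / ‖h‖ ^ 2) • h⟫ ≤ 0 :=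
  rectified_step_does_not_increase_calibration_loss_general L θ h hL g
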